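/- Let λ_i : E → ℝ≥0 be continuous switching rates, i = 1,...,d, on E = ℝ^d × {-1,1}^d, and let Ψ ∈ C¹(ℝ^d). Then the identity λ_i(ξ,θ) - λ_i(ξ, F_i[θ]) = θ_i ∂_i Ψ(ξ) holds for all (ξ,θ) ∈ E and all i if and only if there exist continuous functions γ_i : E → ℝ≥0 with γ_i(ξ,θ) = γ_i(ξ, F_i[θ]) such that λ_i(ξ,θ) = (θ_i ∂_i Ψ(ξ))^+ + γ_i(ξ,θ) for all (ξ,θ) ∈ E. -/

import Mathlib

/-!
Write `a = θ_i ∂_i Ψ(ξ)`. Flipping `θ_i` turns `a` into `-a`, and `a⁺ - (-a)⁺ = a`, so rates of the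
form `a⁺ + γ` with flip-invariant `γ` satisfy the identity. Conversely, given the identity, the
excess `γ = λ_i - a⁺` is flip-invariant for the same reason, and it is nonnegative because
`λ_i(ξ,θ) = a + λ_i(ξ,F_i[θ])` dominates both `0` and `a`.
-/

open Function

lemma max_zero_sub_max_zero_neg (a : ℝ) : max 0 a - max 0 (-a) = a := by
  rw [max_comm, max_comm 0]
  exact max_zero_sub_max_neg_zero_eq_self a

lemma max_zero_le_of_sub_eq {l l' a : ℝ} (hl : 0 ≤ l) (hl' : 0 ≤ l') (h : l - l' = a) :
    max 0 a ≤ l :=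
  max_le hl (by linarith)

section SwitchingRates

variable {ι X : Type*} [DecidableEq ι]

def IsSignVector (θ : ι → ℝ) : Prop :=
  ∀ j, θ j = 1 ∨ θ j = -1

lemma IsSignVector.update_neg {θ : ι → ℝ} (hθ : IsSignVector θ) (i : ι) :
    IsSignVector (update θ i (-θ i)) := by
  intro j
  rcases eq_or_ne j i with rfl | hji
  · rw [update_self]
    rcases hθ j with h | h <;> simp [h]
  · rw [update_of_ne hji]
    exact hθ j

lemma flip_sub_eq_of_eq_max_add {s : ι → X → ℝ} {lam γ : ι → X → (ι → ℝ) → ℝ}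
    (hγ_flip : ∀ ξ θ, IsSignVector θ → ∀ i, γ i ξ θ = γ i ξ (update θ i (-θ i)))
    (hlam : ∀ ξ θ, IsSignVector θ → ∀ i, lam i ξ θ = max 0 (θ i * s i ξ) + γ i ξ θ)
    {ξ : X} {θ : ι → ℝ} (hθ : IsSignVector θ) (i : ι) :
    lam i ξ θ - lam i ξ (update θ i (-θ i)) = θ i * s i ξ := by
  have hflipped := hlam ξ _ (hθ.update_neg i) i
  rw [update_self, neg_mul] at hflipped
  rw [hlam ξ θ hθ i, hflipped, ← hγ_flip ξ θ hθ i, add_sub_add_right_eq_sub,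
    max_zero_sub_max_zero_neg]

variable [TopologicalSpace X]

lemma exists_eq_max_add_of_flip_sub_eq {s : ι → X → ℝ} (hs : ∀ i, Continuous (s i))
    {lam : ι → X → (ι → ℝ) → ℝ} (hlam_cont : ∀ i θ, Continuous fun ξ => lam i ξ θ)
    (hlam_nonneg : ∀ i ξ θ, 0 ≤ lam i ξ θ)
    (hflip : ∀ ξ θ, IsSignVector θ → ∀ i,
      lam i ξ θ - lam i ξ (update θ i (-θ i)) = θ i * s i ξ) :
    ∃ γ : ι → X → (ι → ℝ) → ℝ,
      (∀ i θ, Continuous fun ξ => γ i ξ θ) ∧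
      (∀ i ξ θ, 0 ≤ γ i ξ θ) ∧
      (∀ ξ θ, IsSignVector θ → ∀ i, γ i ξ θ = γ i ξ (update θ i (-θ i))) ∧
      (∀ ξ θ, IsSignVector θ → ∀ i, lam i ξ θ = max 0 (θ i * s i ξ) + γ i ξ θ) := by
  -- The outer `max 0` only makes `γ` nonnegative off the sign vectors, where it is inactive.
  refine ⟨fun i ξ θ => max 0 (lam i ξ θ - max 0 (θ i * s i ξ)), fun i θ => ?_,
    fun i ξ θ => le_max_left _ _, fun ξ θ hθ i => ?_, fun ξ θ hθ i => ?_⟩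
  · fun_prop
  · have hexcess : lam i ξ θ - max 0 (θ i * s i ξ) =
        lam i ξ (update θ i (-θ i)) - max 0 (-θ i * s i ξ) := by
      have := max_zero_sub_max_zero_neg (θ i * s i ξ)
      rw [neg_mul]
      linarith [hflip ξ θ hθ i]
    simp only [update_self, hexcess]
  · have hle := max_zero_le_of_sub_eq (hlam_nonneg i ξ θ) (hlam_nonneg i ξ _) (hflip ξ θ hθ i)
    simp only [max_eq_right (sub_nonneg.mpr hle), add_sub_cancel]

end SwitchingRates

theorem zigzag_rate_characterization_general {d : ℕ}
    (Ψ : (Fin d → ℝ) → ℝ) (hΨ : ContDiff ℝ 1 Ψ)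
    (lam : Fin d → (Fin d → ℝ) → (Fin d → ℝ) → ℝ)
    (hlam_cont : ∀ i θ, Continuous (fun ξ => lam i ξ θ))
    (hlam_nonneg : ∀ i ξ θ, 0 ≤ lam i ξ θ) :
    (∀ (ξ : Fin d → ℝ) (θ : Fin d → ℝ), (∀ j, θ j = 1 ∨ θ j = -1) →
        ∀ i, lam i ξ θ - lam i ξ (Function.update θ i (-θ i)) =
          θ i * fderiv ℝ Ψ ξ (Pi.single i 1)) ↔
      (∃ γ : Fin d → (Fin d → ℝ) → (Fin d → ℝ) → ℝ,
        (∀ i θ, Continuous (fun ξ => γ i ξ θ)) ∧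
        (∀ i ξ θ, 0 ≤ γ i ξ θ) ∧
        (∀ (ξ : Fin d → ℝ) (θ : Fin d → ℝ), (∀ j, θ j = 1 ∨ θ j = -1) →
          ∀ i, γ i ξ θ = γ i ξ (Function.update θ i (-θ i))) ∧
        (∀ (ξ : Fin d → ℝ) (θ : Fin d → ℝ), (∀ j, θ j = 1 ∨ θ j = -1) →
          ∀ i, lam i ξ θ =
            max 0 (θ i * fderiv ℝ Ψ ξ (Pi.single i 1)) + γ i ξ θ)) := by
  have hpartial : ∀ i, Continuous fun ξ => fderiv ℝ Ψ ξ (Pi.single i 1) := fun i =>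
    (hΨ.continuous_fderiv one_ne_zero).clm_apply continuous_const
  exact ⟨exists_eq_max_add_of_flip_sub_eq hpartial hlam_cont hlam_nonneg,
    fun ⟨_, _, _, hγ_flip, hlam⟩ _ _ hθ i => flip_sub_eq_of_eq_max_add hγ_flip hlam hθ i⟩

/-- Characterization of switching rates satisfying the Zig-Zag invariance identity
(Proposition 1): continuous nonnegative rates `lam` satisfy
`lam i (ξ,θ) - lam i (ξ, F_i[θ]) = θ i * ∂_i Ψ(ξ)` for all `(ξ,θ) ∈ E` and `i`
if and only if `lam i (ξ,θ) = (θ i * ∂_i Ψ(ξ))⁺ + γ i (ξ,θ)` for continuous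
nonnegative `γ` with `γ i (ξ,θ) = γ i (ξ, F_i[θ])`. -/
theorem zigzag_rate_characterization {d : ℕ}
    (Ψ : (Fin d → ℝ) → ℝ) (hΨ : ContDiff ℝ 1 Ψ)
    (hint : MeasureTheory.Integrable (fun ξ => Real.exp (-Ψ ξ)))
    (lam : Fin d → (Fin d → ℝ) → (Fin d → ℝ) → ℝ)
    (hlam_cont : ∀ i θ, Continuous (fun ξ => lam i ξ θ))
    (hlam_nonneg : ∀ i ξ θ, 0 ≤ lam i ξ θ) :
    (∀ (ξ : Fin d → ℝ) (θ : Fin d → ℝ), (∀ j, θ j = 1 ∨ θ j = -1) →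
        ∀ i, lam i ξ θ - lam i ξ (Function.update θ i (-θ i)) =
          θ i * fderiv ℝ Ψ ξ (Pi.single i 1)) ↔
      (∃ γ : Fin d → (Fin d → ℝ) → (Fin d → ℝ) → ℝ,
        (∀ i θ, Continuous (fun ξ => γ i ξ θ)) ∧
        (∀ i ξ θ, 0 ≤ γ i ξ θ) ∧
        (∀ (ξ : Fin d → ℝ) (θ : Fin d → ℝ), (∀ j, θ j = 1 ∨ θ j = -1) →
          ∀ i, γ i ξ θ = γ i ξ (Function.update θ i (-θ i))) ∧
        (∀ (ξ : Fin d → ℝ) (θ : Fin d → ℝ), (∀ j, θ j = 1 ∨ θ j = -1) →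
          ∀ i, lam i ξ θ =
            max 0 (θ i * fderiv ℝ Ψ ξ (Pi.single i 1)) + γ i ξ θ)) :=
  zigzag_rate_characterization_general Ψ hΨ lam hlam_cont hlam_nonneg
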